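/- Let N ≥ 1 and (b_1,…,b_N) ∈ ℝ^N, and assume (λ_k)_{k=1}^N are eigenvalues of H_N with eigenvectors (φ^k)_{k=1}^N satisfying H_N φ^k = λ_k φ^k and φ^k_1 = 1, such that (φ^1,…,φ^N) is an orthogonal basis of ℝ^N, and set ρ_k := ⟨φ^k, φ^k⟩. Then for every control f : ℕ → ℝ, every 1 ≤ n ≤ N and every t ≥ 0, the solution of the finite system satisfies the Fourier expansion v^f_{n,t} = Σ_{k=1}^N c^k_t φ^k_n, where c^k_t = (1/ρ_k) Σ_{l=0}^{t} T_l(λ_k) f_{t−l}. -/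

import Mathlib

/-! Because `φ¹, …, φᴺ` is an orthogonal basis with `φᵏ₁ = 1`, completeness gives
`∑ₖ φᵏₙ / ρₖ = δₙ₁`. The coefficient `cᵏ` obeys the recurrence of `T_t(λₖ)` forced by `f / ρₖ`,
and `φᵏ` is a `λₖ`-eigenvector of `H_N`, so the mode `cᵏ_t φᵏₙ` satisfies the interior equation
up to the source `f_{t+1} φᵏₙ / ρₖ`. Summed over `k`, the source is `f_{t+1} δₙ₁`, exactly the
contribution of the boundary value `v_{0,t} = f_t`. Hence the expansion solves the same system as
`v^f`, and that system determines its solution by recursion in `t`. -/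

/-- `solFin N b f t n` is the solution `v^f_{n,t}` of the finite discrete Schrödinger system
with Dirichlet condition at `n = N+1`:
`v_{n,t+1} + v_{n,t-1} - v_{n+1,t} - v_{n-1,t} + b_n v_{n,t} = 0` for `1 ≤ n ≤ N`, `t ≥ 0`,
`v_{n,-1} = v_{n,0} = 0`, `v_{0,t} = f_t`, `v_{N+1,t} = 0`
(the first argument after `b f` is the time `t`, the last the space variable `n`). -/
noncomputable def solFin (N : ℕ) (b f : ℕ → ℝ) : ℕ → ℕ → ℝ
  | 0, n => if n = 0 then f 0 else 0
  | 1, n => if n = 0 then f 1 else if n = N + 1 then 0 else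
      solFin N b f 0 (n + 1) + solFin N b f 0 (n - 1) - b n * solFin N b f 0 n
  | (t + 2), n => if n = 0 then f (t + 2) else if n = N + 1 then 0 else
      solFin N b f (t + 1) (n + 1) + solFin N b f (t + 1) (n - 1) - b n * solFin N b f (t + 1) n
        - solFin N b f t n

/-- `cheb lam t` is the polynomial sequence `T_t(λ)` with `T_0 = 0`, `T_1 = 1`,
`T_{t+1}(λ) = λ T_t(λ) - T_{t-1}(λ)` (so `T_t(2x) = U_{t-1}(x)`, Chebyshev of the 2nd kind). -/
noncomputable def cheb (lam : ℝ) : ℕ → ℝ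
  | 0 => 0
  | 1 => 1
  | (t + 2) => lam * cheb lam (t + 1) - cheb lam t

/-- The `N × N` symmetric Jacobi matrix `H_N` with diagonal `-b_i` and off-diagonal `1`. -/
noncomputable def jacobiH (N : ℕ) (b : ℕ → ℝ) : Matrix (Fin N) (Fin N) ℝ :=
  Matrix.of fun i j =>
    if (i : ℕ) = (j : ℕ) then -b ((i : ℕ) + 1)
    else if (i : ℕ) + 1 = (j : ℕ) ∨ (j : ℕ) + 1 = (i : ℕ) then 1 else 0

open Finset Matrix

noncomputable def chebConv (lam : ℝ) (f : ℕ → ℝ) (t : ℕ) : ℝ :=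
  ∑ l ∈ range (t + 1), cheb lam l * f (t - l)

section chebConv

variable (lam : ℝ) (f : ℕ → ℝ)

theorem chebConv_zero : chebConv lam f 0 = 0 := by
  simp [chebConv, cheb]

theorem chebConv_succ (t : ℕ) :
    chebConv lam f (t + 1) = ∑ l ∈ range (t + 1), cheb lam (l + 1) * f (t - l) := by
  simp [chebConv, sum_range_succ' _ (t + 1), cheb]

theorem chebConv_one : chebConv lam f 1 = f 0 := by
  simp [chebConv_succ, cheb]

theorem chebConv_add_two (t : ℕ) :
    chebConv lam f (t + 2) = lam * chebConv lam f (t + 1) - chebConv lam f t + f (t + 1) := by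
  rw [chebConv_succ, sum_range_succ', chebConv_succ, chebConv, mul_sum, ← sum_sub_distrib]
  congr 1
  · exact sum_congr rfl fun l _ => by simp only [cheb, Nat.add_sub_add_right]; ring
  · simp [cheb]

end chebConv

def zeroExtend {M : Type*} [Zero M] {N : ℕ} (v : Fin N → M) : ℕ → M
  | 0 => 0
  | i + 1 => if h : i < N then v ⟨i, h⟩ else 0

section zeroExtend

variable {M : Type*} {N : ℕ}

@[simp]
theorem zeroExtend_zero [Zero M] (v : Fin N → M) : zeroExtend v 0 = 0 := rfl

@[simp]
theorem zeroExtend_val_add_one [Zero M] (v : Fin N → M) (i : Fin N) :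
    zeroExtend v ((i : ℕ) + 1) = v i := by
  simp [zeroExtend]

@[simp]
theorem zeroExtend_add_one_self [Zero M] (v : Fin N → M) : zeroExtend v (N + 1) = 0 := by
  simp [zeroExtend]

theorem sum_ite_val_add_one_eq [AddCommMonoid M] (v : Fin N → M) (m : ℕ) :
    ∑ j : Fin N, (if (j : ℕ) + 1 = m then v j else 0) = zeroExtend v m := by
  cases m with
  | zero => simp
  | succ i =>
    simp only [Nat.add_right_cancel_iff, zeroExtend]
    split_ifs with hi
    · have hval : ∀ j : Fin N, (j : ℕ) = i ↔ j = ⟨i, hi⟩ := fun j => by rw [Fin.ext_iff]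
      simp only [hval, Fintype.sum_ite_eq']
    · exact sum_eq_zero fun j _ => if_neg (by omega)

end zeroExtend

theorem jacobiH_mulVec_apply (N : ℕ) (b : ℕ → ℝ) (v : Fin N → ℝ) (i : Fin N) :
    (jacobiH N b *ᵥ v) i = zeroExtend v (i + 2) + zeroExtend v i - b (i + 1) * v i := by
  have hentry : ∀ j : Fin N, jacobiH N b i j * v j =
      (if (j : ℕ) + 1 = i + 2 then v j else 0) + (if (j : ℕ) + 1 = i then v j else 0)
        - b (i + 1) * (if (j : ℕ) + 1 = i + 1 then v j else 0) := by
    intro j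
    simp only [jacobiH, of_apply]
    split_ifs <;> first | omega | ring
  simp only [mulVec, dotProduct, hentry, sum_add_distrib, sum_sub_distrib, ← mul_sum,
    sum_ite_val_add_one_eq, zeroExtend_val_add_one]

theorem sum_mul_mul_div_dotProduct_self {ι K : Type*} [Fintype ι] [DecidableEq ι] [Field K]
    (φ : ι → ι → K) (horth : Pairwise fun k l => φ k ⬝ᵥ φ l = 0)
    (hne : ∀ k, φ k ⬝ᵥ φ k ≠ 0) (i j : ι) :
    ∑ k, φ k i * φ k j / (φ k ⬝ᵥ φ k) = if i = j then 1 else 0 := by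
  set P : Matrix ι ι K := Matrix.of φ
  set d : ι → K := fun k => φ k ⬝ᵥ φ k
  have hPPt : P * Pᵀ = diagonal d := by
    ext k l
    rcases eq_or_ne k l with rfl | hkl
    · simp [P, d, mul_apply, dotProduct]
    · simp [P, d, mul_apply, hkl, ← horth hkl, dotProduct]
  have hleft : diagonal d⁻¹ * P * Pᵀ = 1 := by
    rw [Matrix.mul_assoc, hPPt, diagonal_mul_diagonal, ← diagonal_one]
    exact congrArg diagonal (funext fun k => inv_mul_cancel₀ (hne k))
  have hright : Pᵀ * (diagonal d⁻¹ * P) = 1 := mul_eq_one_comm.mp hleft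
  rw [← one_apply, ← hright]
  simp only [P, d, mul_apply, diagonal_apply, transpose_apply, of_apply, Pi.inv_apply, ite_mul,
    zero_mul, sum_ite_eq, mem_univ, if_true]
  exact sum_congr rfl fun k _ => by ring

/-- Spatial points `1 ≤ n ≤ N` are written `i + 1` with `i : Fin N`; `first_step` is `step` at
`t = 0` with the convention `w (-1) n = 0`. -/
structure IsSolFin (N : ℕ) (b f : ℕ → ℝ) (w : ℕ → ℕ → ℝ) : Prop where
  left : ∀ t, w t 0 = f t
  right : ∀ t, w t (N + 1) = 0
  initial : ∀ i : Fin N, w 0 (i + 1) = 0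
  first_step : ∀ i : Fin N, w 1 (i + 1) = w 0 (i + 2) + w 0 i - b (i + 1) * w 0 (i + 1)
  step : ∀ t, ∀ i : Fin N, w (t + 2) (i + 1) =
    w (t + 1) (i + 2) + w (t + 1) i - b (i + 1) * w (t + 1) (i + 1) - w t (i + 1)

theorem isSolFin_solFin (N : ℕ) (b f : ℕ → ℝ) : IsSolFin N b f (solFin N b f) where
  left t := by rcases t with _ | _ | t <;> simp [solFin]
  right t := by rcases t with _ | _ | t <;> simp [solFin]
  initial i := by simp [solFin]
  first_step i := by rw [solFin.eq_2]; simp [i.isLt.ne]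
  step t i := by rw [solFin.eq_3]; simp [i.isLt.ne]

theorem IsSolFin.unique {N : ℕ} {b f : ℕ → ℝ} {v w : ℕ → ℕ → ℝ} (hv : IsSolFin N b f v)
    (hw : IsSolFin N b f w) (t m : ℕ) (hm : m ≤ N + 1) : v t m = w t m := by
  have of_interior : ∀ t, (∀ i : Fin N, v t (i + 1) = w t (i + 1)) →
      ∀ m ≤ N + 1, v t m = w t m := by
    intro t h m hm
    rcases m with _ | i
    · rw [hv.left, hw.left]
    obtain rfl | hi := eq_or_lt_of_le (Nat.le_of_add_le_add_right hm)
    · rw [hv.right, hw.right]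
    · exact h ⟨i, hi⟩
  induction t using Nat.strong_induction_on generalizing m with
  | _ t ih =>
    refine of_interior t (fun i => ?_) m hm
    match t, ih with
    | 0, _ => rw [hv.initial, hw.initial]
    | 1, ih =>
      rw [hv.first_step, hw.first_step, ih 0 one_pos (i + 2) (by omega), ih 0 one_pos i (by omega),
        ih 0 one_pos (i + 1) (by omega)]
    | t + 2, ih =>
      rw [hv.step, hw.step, ih (t + 1) (by omega) (i + 2) (by omega),
        ih (t + 1) (by omega) i (by omega), ih (t + 1) (by omega) (i + 1) (by omega),
        ih t (by omega) (i + 1) (by omega)]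

/-- The modes vanish at `m = 0`, so the boundary value `f t` is added there separately. -/
theorem isSolFin_fourier {N : ℕ} {b : ℕ → ℝ} {lam rho : Fin N → ℝ} {phi : Fin N → Fin N → ℝ}
    (heig : ∀ k, jacobiH N b *ᵥ phi k = lam k • phi k)
    (hdirac : ∀ i : Fin N, ∑ k, 1 / rho k * phi k i = if (i : ℕ) = 0 then 1 else 0)
    (f : ℕ → ℝ) :
    IsSolFin N b f fun t m =>
      (∑ k, (1 / rho k * chebConv (lam k) f t) * zeroExtend (phi k) m) + if m = 0 then f t else 0 where
  left t := by simp
  right t := by simp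
  initial i := by simp [chebConv_zero]
  first_step i := by
    simp only [chebConv_zero, chebConv_one, mul_zero, zero_mul, sum_const_zero, zero_add,
      zeroExtend_val_add_one, mul_right_comm _ (f 0), ← sum_mul, hdirac]
    split_ifs <;> first | contradiction | ring
  step t i := by
    have hmode : ∀ k, 1 / rho k * chebConv (lam k) f (t + 2) * phi k i =
        1 / rho k * chebConv (lam k) f (t + 1) * zeroExtend (phi k) (i + 2)
          + 1 / rho k * chebConv (lam k) f (t + 1) * zeroExtend (phi k) i
          - b (i + 1) * (1 / rho k * chebConv (lam k) f (t + 1) * phi k i)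
          - 1 / rho k * chebConv (lam k) f t * phi k i + f (t + 1) * (1 / rho k * phi k i) := by
      intro k
      have heig_i : lam k * phi k i =
          zeroExtend (phi k) (i + 2) + zeroExtend (phi k) i - b (i + 1) * phi k i := by
        rw [← jacobiH_mulVec_apply, heig]; rfl
      rw [chebConv_add_two]
      linear_combination 1 / rho k * chebConv (lam k) f (t + 1) * heig_i
    simp only [zeroExtend_val_add_one, hmode, sum_add_distrib, sum_sub_distrib, ← mul_sum, hdirac]
    split_ifs <;> first | contradiction | ring

/-- Fourier expansion of the solution of the finite system in the eigenvectors of `H_N`. -/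
theorem fourier_expansion (N : ℕ) (hN : 1 ≤ N) (b : ℕ → ℝ)
    (lam : Fin N → ℝ) (phi : Fin N → (Fin N → ℝ))
    (heig : ∀ k, (jacobiH N b).mulVec (phi k) = lam k • phi k)
    (hfirst : ∀ k, phi k ⟨0, hN⟩ = 1)
    (horth : ∀ k l, k ≠ l → dotProduct (phi k) (phi l) = 0)
    (rho : Fin N → ℝ) (hrho : ∀ k, rho k = dotProduct (phi k) (phi k)) :
    ∀ f : ℕ → ℝ, ∀ n : Fin N, ∀ t : ℕ,
      solFin N b f t ((n : ℕ) + 1) =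
        ∑ k, ((1 / rho k) * ∑ l ∈ Finset.range (t + 1), cheb (lam k) l * f (t - l)) * phi k n := by
  intro f n t
  obtain rfl : rho = fun k => phi k ⬝ᵥ phi k := funext hrho
  have hne : ∀ k, phi k ⬝ᵥ phi k ≠ 0 := fun k =>
    dotProduct_self_eq_zero.not.mpr fun h => by simpa [h] using hfirst k
  have hdirac (i : Fin N) : ∑ k, 1 / (phi k ⬝ᵥ phi k) * phi k i = if (i : ℕ) = 0 then 1 else 0 := by
    simpa [hfirst, Fin.ext_iff, div_eq_inv_mul] using
      sum_mul_mul_div_dotProduct_self phi (fun k l => horth k l) hne i ⟨0, hN⟩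
  simpa [chebConv] using
    (isSolFin_solFin N b f).unique (isSolFin_fourier heig hdirac f) t (n + 1) (by omega)
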